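/- arXiv:1811.04775 — 2 statements merged into one kernel-verified Lean document; each statement's English description precedes it below -/
import Mathlib

section
/- For positive integers r₁,…,r_M summing to rM and any 1 ≤ K' ≤ M, the identity η(K'-1)·(∑ᵢ rᵢ) = (1/(M-K'+1))·∑_{{i₁,…,i_{K'}}⊆{1,…,M}} [∏_{t=1}^{K'} r_{i_t} · ∑_{j≠k, j,k∈{1,…,K'}} r_{i_k}/r_{i_j}] + K'·η(K') holds, where η(K) denotes the K-th elementary symmetric polynomial of r₁,…,r_M. -/
/-! Both sides are sums over pairs `(S, j)` with `#S = K' - 1` and `j ∉ S`, via the bijection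
`(S, j) ↦ insert j S`. Splitting `∑ i, r i` into the indices in `S` and outside it gives
`η(K'-1) · ∑ r = ∑_S (∏ S)(∑ S) + K' η(K')`, since every `K'`-set arises from `K'` pairs.
Clearing the denominator `r j` in the double sum rewrites it as `∑_T ∑_{j ∈ T} (∏ T∖j)(∑ T∖j)`,
in which every `(K'-1)`-set `S` occurs once for each of the `M - K' + 1` indices outside it. -/

open Finset

namespace Finset

variable {α : Type*} [DecidableEq α]

theorem sum_powersetCard_succ_sum_erase {β : Type*} [AddCommMonoid β] (s : Finset α) (k : ℕ)
    (f : Finset α → α → β) :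
    ∑ T ∈ powersetCard (k + 1) s, ∑ j ∈ T, f (T.erase j) j
      = ∑ S ∈ powersetCard k s, ∑ j ∈ s \ S, f S j := by
  rw [sum_sigma', sum_sigma']
  refine sum_nbij' (fun p => ⟨p.1.erase p.2, p.2⟩) (fun p => ⟨insert p.2 p.1, p.2⟩)
    ?_ ?_ ?_ ?_ (fun _ _ => rfl)
  · rintro ⟨T, j⟩ hp
    simp only [mem_sigma, mem_powersetCard] at hp ⊢
    obtain ⟨⟨hTs, hT⟩, hj⟩ := hp
    refine ⟨⟨(erase_subset j T).trans hTs, by rw [card_erase_of_mem hj, hT]; rfl⟩, ?_⟩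
    simp [hTs hj]
  · rintro ⟨S, j⟩ hp
    simp only [mem_sigma, mem_powersetCard, mem_sdiff] at hp ⊢
    obtain ⟨⟨hSs, hS⟩, hjs, hjS⟩ := hp
    exact ⟨⟨insert_subset hjs hSs, by rw [card_insert_of_notMem hjS, hS]⟩, mem_insert_self j S⟩
  · rintro ⟨T, j⟩ hp
    simp only [mem_sigma] at hp
    simp [insert_erase hp.2]
  · rintro ⟨S, j⟩ hp
    simp only [mem_sigma, mem_sdiff] at hp
    simp [erase_insert hp.2.2]

theorem sum_powersetCard_prod_mul_sum {R : Type*} [CommSemiring R] (s : Finset α) (k : ℕ)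
    (r : α → R) :
    (∑ S ∈ powersetCard k s, ∏ i ∈ S, r i) * ∑ i ∈ s, r i
      = ∑ S ∈ powersetCard k s, (∏ i ∈ S, r i) * ∑ i ∈ S, r i
        + (k + 1) * ∑ T ∈ powersetCard (k + 1) s, ∏ i ∈ T, r i := by
  have split : ∀ S ∈ powersetCard k s, (∏ i ∈ S, r i) * ∑ i ∈ s, r i
      = (∏ i ∈ S, r i) * ∑ i ∈ S, r i + ∑ j ∈ s \ S, (∏ i ∈ S, r i) * r j := by
    intro S hS
    rw [← mul_sum, ← mul_add, add_comm, sum_sdiff (mem_powersetCard.mp hS).1]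
  have insert_count : ∀ T ∈ powersetCard (k + 1) s,
      ∑ j ∈ T, (∏ i ∈ T.erase j, r i) * r j = (k + 1) * ∏ i ∈ T, r i := by
    intro T hT
    rw [sum_congr rfl fun j hj => by rw [mul_comm, mul_prod_erase T r hj], sum_const,
      (mem_powersetCard.mp hT).2, nsmul_eq_mul, Nat.cast_succ]
  rw [sum_mul, sum_congr rfl split, sum_add_distrib, mul_sum, ← sum_congr rfl insert_count,
    sum_powersetCard_succ_sum_erase s k fun S j => (∏ i ∈ S, r i) * r j]

theorem prod_mul_sum_sum_sdiff_singleton_div {K : Type*} [Field K] (T : Finset α) (r : α → K)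
    (hr : ∀ i ∈ T, r i ≠ 0) :
    (∏ i ∈ T, r i) * ∑ j ∈ T, ∑ k ∈ T \ {j}, r k / r j
      = ∑ j ∈ T, (∏ i ∈ T.erase j, r i) * ∑ k ∈ T.erase j, r k := by
  rw [mul_sum]
  refine sum_congr rfl fun j hj => ?_
  rw [sdiff_singleton_eq_erase, ← sum_div, ← mul_prod_erase T r hj]
  field_simp [hr j hj]

theorem sum_powersetCard_succ_prod_mul_sum_sum_div {K : Type*} [Field K] (s : Finset α) (k : ℕ)
    (r : α → K) (hr : ∀ i ∈ s, r i ≠ 0) :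
    ∑ T ∈ powersetCard (k + 1) s, (∏ i ∈ T, r i) * ∑ j ∈ T, ∑ l ∈ T \ {j}, r l / r j
      = (#s - k : ℕ) * ∑ S ∈ powersetCard k s, (∏ i ∈ S, r i) * ∑ i ∈ S, r i := by
  rw [sum_congr rfl fun T hT => prod_mul_sum_sum_sdiff_singleton_div T r
      fun i hi => hr i ((mem_powersetCard.mp hT).1 hi),
    sum_powersetCard_succ_sum_erase s k fun S _ => (∏ i ∈ S, r i) * ∑ l ∈ S, r l, mul_sum]
  refine sum_congr rfl fun S hS => ?_
  obtain ⟨hSs, hS⟩ := mem_powersetCard.mp hS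
  rw [sum_const, card_sdiff_of_subset hSs, hS, nsmul_eq_mul]

end Finset

theorem stmt1_general (M : ℕ) (r : Fin M → ℝ) (hpos : ∀ i, 0 < r i)
    (K' : ℕ) (hK1 : 1 ≤ K') (hKM : K' ≤ M) :
    (∑ S ∈ Finset.powersetCard (K' - 1) (Finset.univ : Finset (Fin M)), ∏ i ∈ S, r i)
        * (∑ i, r i)
      = (1 / ((M : ℝ) - K' + 1)) *
          (∑ S ∈ Finset.powersetCard K' (Finset.univ : Finset (Fin M)),
            ((∏ i ∈ S, r i) * ∑ j ∈ S, ∑ k ∈ S \ {j}, r k / r j))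
        + K' * ∑ S ∈ Finset.powersetCard K' (Finset.univ : Finset (Fin M)), ∏ i ∈ S, r i := by
  obtain ⟨k, rfl⟩ := Nat.exists_eq_add_of_le' hK1
  have hkM : ((M - k : ℕ) : ℝ) = (M : ℝ) - ↑(k + 1) + 1 := by
    push_cast [Nat.cast_sub (by omega : k ≤ M)]; ring
  have hne : (M : ℝ) - ↑(k + 1) + 1 ≠ 0 := by
    rw [← hkM]; exact_mod_cast (by omega : M - k ≠ 0)
  rw [Nat.add_sub_cancel, sum_powersetCard_prod_mul_sum,
    sum_powersetCard_succ_prod_mul_sum_sum_div _ _ _ fun i _ => (hpos i).ne',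
    card_univ, Fintype.card_fin, hkM, one_div, inv_mul_cancel_left₀ hne, Nat.cast_succ]

theorem stmt1 (M : ℕ) (r : Fin M → ℝ) (hpos : ∀ i, 0 < r i)
    (r0 : ℝ) (hsum : ∑ i, r i = r0 * M)
    (K' : ℕ) (hK1 : 1 ≤ K') (hKM : K' ≤ M) :
    (∑ S ∈ Finset.powersetCard (K' - 1) (Finset.univ : Finset (Fin M)), ∏ i ∈ S, r i)
        * (∑ i, r i)
      = (1 / ((M : ℝ) - K' + 1)) *
          (∑ S ∈ Finset.powersetCard K' (Finset.univ : Finset (Fin M)),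
            ((∏ i ∈ S, r i) * ∑ j ∈ S, ∑ k ∈ S \ {j}, r k / r j))
        + K' * ∑ S ∈ Finset.powersetCard K' (Finset.univ : Finset (Fin M)), ∏ i ∈ S, r i :=
  stmt1_general M r hpos K' hK1 hKM
end

section
/- Suppose y = |A x| (entrywise modulus) where x ∈ ℂ^N, x has a single nonzero entry x_n, and a measurement block equals (e_S ⊙ T) where T is the 2×N matrix with first row all ones and second row (2cos(ω), 2cos(2ω), …, 2cos(Nω)) for ω ∈ (0, π/(2N)]. If the block's two measurements are y¹ = |x_n| and y² = |2cos(nω) x_n|, then |x_n| = y¹ and n = (1/ω)·arccos(y²/(2y¹)). -/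
/-! The block measures `x n` and `2 cos (n ω) x n`. Since `n ω ∈ (0, π/2]`, the cosine is
nonnegative, so the modulus of the second measurement is `2 cos (n ω) |x n|`; the ratio
`y² / (2 y¹)` is therefore `cos (n ω)`, which `arccos` inverts on `[0, π]`. -/

open Real

lemma natCast_mul_le_pi_div_two {N n : ℕ} (hnN : n ≤ N) {ω : ℝ} (hω0 : 0 ≤ ω)
    (hωN : ω ≤ π / (2 * N)) : (n : ℝ) * ω ≤ π / 2 := by
  rcases Nat.eq_zero_or_pos N with rfl | hN
  · simp_all; positivity
  calc (n : ℝ) * ω ≤ N * (π / (2 * N)) := by gcongr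
    _ = π / 2 := by field_simp

lemma arccos_norm_two_cos_mul_div_two_norm {θ : ℝ} (hθ0 : 0 ≤ θ) (hθ : θ ≤ π / 2)
    {z : ℂ} (hz : z ≠ 0) : arccos (‖((2 * cos θ : ℝ) : ℂ) * z‖ / (2 * ‖z‖)) = θ := by
  have hcos : 0 ≤ cos θ := cos_nonneg_of_mem_Icc ⟨by linarith [pi_pos], hθ⟩
  have hz' : ‖z‖ ≠ 0 := norm_ne_zero_iff.mpr hz
  have hratio : ‖((2 * cos θ : ℝ) : ℂ) * z‖ / (2 * ‖z‖) = cos θ := by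
    rw [norm_mul, Complex.norm_real, Real.norm_of_nonneg (by positivity)]
    field_simp
  rw [hratio, arccos_cos hθ0 (by linarith [pi_pos])]

theorem stmt12 (N n : ℕ) (hn1 : 1 ≤ n) (hnN : n ≤ N)
    (ω : ℝ) (hω0 : 0 < ω) (hωN : ω ≤ Real.pi / (2 * N))
    (x : ℕ → ℂ) (hsupp : ∀ m, m ≠ n → x m = 0) (hxn : x n ≠ 0)
    (y1 y2 : ℝ)
    (hy1 : y1 = ‖∑ m ∈ Finset.Icc 1 N, x m‖)
    (hy2 : y2 = ‖∑ m ∈ Finset.Icc 1 N,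
        ((2 * Real.cos ((m : ℝ) * ω) : ℝ) : ℂ) * x m‖) :
    ‖x n‖ = y1 ∧ (n : ℝ) = (1 / ω) * Real.arccos (y2 / (2 * y1)) := by
  have hn : n ∈ Finset.Icc 1 N := Finset.mem_Icc.mpr ⟨hn1, hnN⟩
  rw [Finset.sum_eq_single_of_mem n hn fun m _ hm => hsupp m hm] at hy1
  rw [Finset.sum_eq_single_of_mem n hn fun m _ hm => by rw [hsupp m hm, mul_zero]] at hy2
  refine ⟨hy1.symm, ?_⟩
  rw [hy1, hy2, arccos_norm_two_cos_mul_div_two_norm (by positivity)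
    (natCast_mul_le_pi_div_two hnN hω0.le hωN) hxn]
  field_simp
end
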